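/- arXiv:2307.04426 — 2 statements merged into one kernel-verified Lean document; each statement's English description precedes it below -/
import Mathlib

section
/- Let g : ℝ⁴ → ℝ be a bounded continuous function and let ρ > 0. Then lim_{δ→0⁺} (1/|ln δ|) · ∫_{B(0,ρ/δ)} g(δt) · (|t|²−1)/(1+|t|²)³ dt = 2π² · g(0). -/
/-! The kernel `k(r) = (r² − 1)/(1 + r²)³` is radial and `r³ k(r)` has the explicit primitive
`F(r) = log(1 + r²)/2 + O(1/(1 + r²))`, so in polar coordinates
`∫_{B(0,ρ/δ)} k = 2π² (F(ρ/δ) − 1)` grows like `2π² |log δ|`; this is the main term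
`g(0) · 2π² |log δ|`. For the error, `|k(r)| ≤ (1 + r²)⁻²`: on `|t| < η/δ` continuity makes
`|g(δt) − g(0)| ≤ ε`, costing `ε · 2π² |log δ| + O(1)`, while on the shell `η/δ ≤ |t| < ρ/δ`
the majorant has mass at most `2π² log(ρ/η)`, independent of `δ`. -/

open MeasureTheory Real Filter

noncomputable section

/-- Euclidean space ℝ⁴. -/
abbrev E4 := EuclideanSpace ℝ (Fin 4)

open Metric Set Topology

theorem Continuous.integrableOn_ball {X : Type*} [MetricSpace X] [ProperSpace X]
    [MeasurableSpace X] [OpensMeasurableSpace X] {μ : Measure X} [IsFiniteMeasureOnCompacts μ]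
    {f : X → ℝ} (hf : Continuous f) (x : X) (r : ℝ) : IntegrableOn f (ball x r) μ :=
  (hf.continuousOn.integrableOn_compact (isCompact_closedBall x r)).mono_set ball_subset_closedBall

theorem setIntegral_ball_fun_norm_addHaar {E F : Type*} [NormedAddCommGroup E] [NormedSpace ℝ E]
    [Nontrivial E] [FiniteDimensional ℝ E] [MeasurableSpace E] [BorelSpace E] (μ : Measure E)
    [μ.IsAddHaarMeasure] [NormedAddCommGroup F] [NormedSpace ℝ F] (f : ℝ → F) {R : ℝ}
    (hR : 0 ≤ R) :
    ∫ x in ball (0 : E) R, f ‖x‖ ∂μ = Module.finrank ℝ E • μ.real (ball 0 1) •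
      ∫ r in (0)..R, r ^ (Module.finrank ℝ E - 1) • f r := by
  have hind : (ball (0 : E) R).indicator (fun x => f ‖x‖) = fun x => (Iio R).indicator f ‖x‖ := by
    ext x
    by_cases hx : ‖x‖ < R <;> simp [hx]
  rw [← integral_indicator measurableSet_ball, hind,
    integral_fun_norm_addHaar μ ((Iio R).indicator f)]
  simp_rw [← indicator_smul_apply (Iio R) (fun r : ℝ => r ^ (Module.finrank ℝ E - 1)) f]
  rw [setIntegral_indicator measurableSet_Iio, Ioi_inter_Iio, intervalIntegral.integral_of_le hR,
    integral_Ioc_eq_integral_Ioo]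

theorem measureReal_ball_zero_one_E4 : volume.real (ball (0 : E4) 1) = π ^ 2 / 2 := by
  rw [measureReal_def, InnerProductSpace.volume_ball_of_dim_even (k := 2) (by simp)]
  simp [ENNReal.toReal_ofReal (by positivity : (0 : ℝ) ≤ π ^ 2 / 2)]

theorem setIntegral_ball_fun_norm_E4 (f : ℝ → ℝ) {R : ℝ} (hR : 0 ≤ R) :
    ∫ t in ball (0 : E4) R, f ‖t‖ = 2 * π ^ 2 * ∫ r in (0)..R, r ^ 3 * f r := by
  rw [setIntegral_ball_fun_norm_addHaar volume f hR, finrank_euclideanSpace_fin,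
    measureReal_ball_zero_one_E4]
  norm_num
  ring

def radialKernel (r : ℝ) : ℝ := (r ^ 2 - 1) / (1 + r ^ 2) ^ 3

def radialMajorant (r : ℝ) : ℝ := ((1 + r ^ 2) ^ 2)⁻¹

def radialKernelPrimitive (r : ℝ) : ℝ :=
  (log (1 + r ^ 2) + 3 * (1 + r ^ 2)⁻¹ - ((1 + r ^ 2) ^ 2)⁻¹) / 2

def radialMajorantPrimitive (r : ℝ) : ℝ := (log (1 + r ^ 2) + (1 + r ^ 2)⁻¹) / 2

@[fun_prop]
theorem continuous_radialKernel : Continuous radialKernel :=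
  Continuous.div (by fun_prop) (by fun_prop) fun r => by positivity

@[fun_prop]
theorem continuous_radialMajorant : Continuous radialMajorant :=
  Continuous.inv₀ (by fun_prop) fun r => by positivity

theorem abs_radialKernel_le (r : ℝ) : |radialKernel r| ≤ radialMajorant r := by
  have hpos : (0 : ℝ) < 1 + r ^ 2 := by positivity
  rw [radialKernel, radialMajorant, abs_div, abs_of_pos (pow_pos hpos 3),
    div_le_iff₀ (pow_pos hpos 3)]
  calc |r ^ 2 - 1| ≤ 1 + r ^ 2 := abs_le.mpr ⟨by nlinarith, by nlinarith⟩
    _ = ((1 + r ^ 2) ^ 2)⁻¹ * (1 + r ^ 2) ^ 3 := by field_simp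

theorem hasDerivAt_one_add_sq (r : ℝ) : HasDerivAt (fun r : ℝ => 1 + r ^ 2) (2 * r) r := by
  simpa using (hasDerivAt_pow 2 r).const_add 1

theorem hasDerivAt_radialKernelPrimitive (r : ℝ) :
    HasDerivAt radialKernelPrimitive (r ^ 3 * radialKernel r) r := by
  have hpos : (0 : ℝ) < 1 + r ^ 2 := by positivity
  have h := hasDerivAt_one_add_sq r
  refine HasDerivAt.congr_deriv ((((h.log hpos.ne').add ((h.inv hpos.ne').const_mul 3)).sub
    ((h.pow 2).inv (pow_pos hpos 2).ne')).div_const 2) ?_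
  simp only [radialKernel, Pi.pow_apply]
  field_simp
  ring

theorem hasDerivAt_radialMajorantPrimitive (r : ℝ) :
    HasDerivAt radialMajorantPrimitive (r ^ 3 * radialMajorant r) r := by
  have hpos : (0 : ℝ) < 1 + r ^ 2 := by positivity
  have h := hasDerivAt_one_add_sq r
  refine HasDerivAt.congr_deriv (((h.log hpos.ne').add (h.inv hpos.ne')).div_const 2) ?_
  rw [radialMajorant]
  field_simp
  ring

theorem integral_ball_radialKernel {R : ℝ} (hR : 0 ≤ R) :
    ∫ t in ball (0 : E4) R, radialKernel ‖t‖ = 2 * π ^ 2 * (radialKernelPrimitive R - 1) := by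
  rw [setIntegral_ball_fun_norm_E4 _ hR, intervalIntegral.integral_eq_sub_of_hasDerivAt
    (fun r _ => hasDerivAt_radialKernelPrimitive r)
    ((by fun_prop : Continuous fun r => r ^ 3 * radialKernel r).intervalIntegrable _ _)]
  norm_num [radialKernelPrimitive]

theorem integral_ball_radialMajorant {R : ℝ} (hR : 0 ≤ R) :
    ∫ t in ball (0 : E4) R, radialMajorant ‖t‖ =
      2 * π ^ 2 * (radialMajorantPrimitive R - 1 / 2) := by
  rw [setIntegral_ball_fun_norm_E4 _ hR, intervalIntegral.integral_eq_sub_of_hasDerivAt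
    (fun r _ => hasDerivAt_radialMajorantPrimitive r)
    ((by fun_prop : Continuous fun r => r ^ 3 * radialMajorant r).intervalIntegrable _ _)]
  norm_num [radialMajorantPrimitive]

theorem radialMajorantPrimitive_sub_half_le (R : ℝ) :
    radialMajorantPrimitive R - 1 / 2 ≤ log (1 + R ^ 2) / 2 := by
  have : (1 + R ^ 2)⁻¹ ≤ 1 := inv_le_one_of_one_le₀ (by nlinarith)
  rw [radialMajorantPrimitive]
  linarith

theorem radialMajorantPrimitive_sub_le {a b : ℝ} (ha : 0 < a) (hab : a ≤ b) :
    radialMajorantPrimitive b - radialMajorantPrimitive a ≤ log (b / a) := by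
  have hb : 0 < b := ha.trans_le hab
  have hinv : (1 + b ^ 2)⁻¹ ≤ (1 + a ^ 2)⁻¹ := by gcongr
  have hlog : log ((1 + b ^ 2) / (1 + a ^ 2)) ≤ log ((b / a) ^ 2) := by
    gcongr
    rw [div_pow, div_le_div_iff₀ (by positivity) (by positivity)]
    nlinarith
  rw [log_div (by positivity) (by positivity), log_pow] at hlog
  rw [radialMajorantPrimitive, radialMajorantPrimitive]
  push_cast at hlog
  linarith

theorem tendsto_abs_log_nhdsGT_zero : Tendsto (fun δ : ℝ => |log δ|) (𝓝[>] 0) atTop :=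
  tendsto_abs_atBot_atTop.comp tendsto_log_nhdsGT_zero

theorem tendsto_div_abs_log_of_tendsto_add_log {f : ℝ → ℝ} {c : ℝ}
    (hf : Tendsto (fun δ => f δ + log δ) (𝓝[>] 0) (𝓝 c)) :
    Tendsto (fun δ => f δ / |log δ|) (𝓝[>] 0) (𝓝 1) := by
  have heq : ∀ᶠ δ in 𝓝[>] (0 : ℝ), (f δ + log δ) / |log δ| + 1 = f δ / |log δ| := by
    filter_upwards [Ioo_mem_nhdsGT zero_lt_one] with δ ⟨hδ0, hδ1⟩
    have hlog := log_neg hδ0 hδ1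
    have hlog_ne := hlog.ne
    rw [abs_of_neg hlog]
    field_simp
    ring
  simpa using ((hf.div_atTop tendsto_abs_log_nhdsGT_zero).add_const 1).congr' heq

theorem tendsto_log_one_add_div_sq_add_log {ρ : ℝ} (hρ : 0 < ρ) :
    Tendsto (fun δ => log (1 + (ρ / δ) ^ 2) / 2 + log δ) (𝓝[>] 0) (𝓝 (log ρ)) := by
  have hcont : ContinuousAt (fun δ : ℝ => log (δ ^ 2 + ρ ^ 2) / 2) 0 := by
    fun_prop (disch := positivity)
  have heq : ∀ᶠ δ in 𝓝[>] (0 : ℝ), log (δ ^ 2 + ρ ^ 2) / 2 = log (1 + (ρ / δ) ^ 2) / 2 + log δ := by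
    filter_upwards [self_mem_nhdsWithin] with δ (hδ : 0 < δ)
    rw [show 1 + (ρ / δ) ^ 2 = (δ ^ 2 + ρ ^ 2) / δ ^ 2 by field_simp,
      log_div (by positivity) (by positivity), log_pow]
    push_cast
    ring
  have hval : log ((0 : ℝ) ^ 2 + ρ ^ 2) / 2 = log ρ := by simp [log_pow]
  rw [← hval]
  exact (hcont.tendsto.mono_left nhdsWithin_le_nhds).congr' heq

theorem tendsto_radialKernelPrimitive_sub_log :
    Tendsto (fun R => radialKernelPrimitive R - log (1 + R ^ 2) / 2) atTop (𝓝 0) := by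
  have hinv : Tendsto (fun R : ℝ => (1 + R ^ 2)⁻¹) atTop (𝓝 0) :=
    tendsto_inv_atTop_zero.comp (tendsto_atTop_add_const_left _ 1 (tendsto_pow_atTop two_ne_zero))
  convert ((hinv.const_mul 3).sub (hinv.pow 2)).div_const 2 using 2 with R
  · rw [radialKernelPrimitive, inv_pow]
    ring
  · simp

theorem tendsto_integral_ball_radialKernel_div_abs_log {ρ : ℝ} (hρ : 0 < ρ) :
    Tendsto (fun δ => (∫ t in ball (0 : E4) (ρ / δ), radialKernel ‖t‖) / |log δ|) (𝓝[>] 0)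
      (𝓝 (2 * π ^ 2)) := by
  have hR : Tendsto (fun δ : ℝ => ρ / δ) (𝓝[>] 0) atTop := by
    simpa [div_eq_mul_inv] using tendsto_inv_nhdsGT_zero.const_mul_atTop hρ
  have hF : Tendsto (fun δ => radialKernelPrimitive (ρ / δ) - 1 + log δ) (𝓝[>] 0)
      (𝓝 (0 + log ρ - 1)) := by
    refine (((tendsto_radialKernelPrimitive_sub_log.comp hR).add
      (tendsto_log_one_add_div_sq_add_log hρ)).sub_const 1).congr fun δ => ?_
    simp only [Function.comp_apply]
    ring
  have heq : ∀ᶠ δ in 𝓝[>] (0 : ℝ), 2 * π ^ 2 * ((radialKernelPrimitive (ρ / δ) - 1) / |log δ|) =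
      (∫ t in ball (0 : E4) (ρ / δ), radialKernel ‖t‖) / |log δ| := by
    filter_upwards [self_mem_nhdsWithin] with δ (hδ : 0 < δ)
    rw [integral_ball_radialKernel (div_pos hρ hδ).le]
    ring
  simpa using ((tendsto_div_abs_log_of_tendsto_add_log hF).const_mul (2 * π ^ 2)).congr' heq

theorem abs_setIntegral_mul_le_of_abs_le {α : Type*} [MeasurableSpace α] {μ : Measure α}
    {s u : Set α} (hu : MeasurableSet u) {f k K : α → ℝ} {ε C : ℝ} (hK : IntegrableOn K s μ)
    (hk : ∀ x, |k x| ≤ K x) (hε : 0 ≤ ε) (hfu : ∀ x ∈ u, |f x| ≤ ε) (hf : ∀ x, |f x| ≤ C) :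
    |∫ x in s, f x * k x ∂μ| ≤ ε * ∫ x in s, K x ∂μ + C * ∫ x in s \ u, K x ∂μ := by
  have hKu : IntegrableOn (uᶜ.indicator K) s μ := hK.indicator hu.compl
  have hbound : ∀ x, ‖f x * k x‖ ≤ ε * K x + C * uᶜ.indicator K x := by
    intro x
    have hK0 : 0 ≤ K x := (abs_nonneg _).trans (hk x)
    rw [Real.norm_eq_abs, abs_mul]
    by_cases hx : x ∈ u
    · rw [indicator_of_notMem (notMem_compl_iff.mpr hx), mul_zero, add_zero]
      exact mul_le_mul (hfu x hx) (hk x) (abs_nonneg _) hε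
    · rw [indicator_of_mem (mem_compl hx)]
      have := mul_le_mul (hf x) (hk x) (abs_nonneg _) ((abs_nonneg _).trans (hf x))
      nlinarith [mul_nonneg hε hK0]
  calc |∫ x in s, f x * k x ∂μ| ≤ ∫ x in s, (ε * K x + C * uᶜ.indicator K x) ∂μ := by
        rw [← Real.norm_eq_abs]
        exact norm_integral_le_of_norm_le ((hK.const_mul ε).add (hKu.const_mul C))
          (Eventually.of_forall hbound)
    _ = ε * ∫ x in s, K x ∂μ + C * ∫ x in s \ u, K x ∂μ := by
        rw [integral_add (hK.const_mul ε) (hKu.const_mul C), integral_const_mul,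
          integral_const_mul, setIntegral_indicator hu.compl, sdiff_eq]

theorem abs_integral_ball_sub_mul_radialKernel_le {g : E4 → ℝ} {M ε η ρ δ : ℝ}
    (hM : ∀ x, |g x| ≤ M) (hε : 0 ≤ ε) (hη : 0 < η) (hηρ : η ≤ ρ) (hδ : 0 < δ)
    (hgη : ∀ x ∈ ball (0 : E4) η, |g x - g 0| ≤ ε) :
    |∫ t in ball (0 : E4) (ρ / δ), (g (δ • t) - g 0) * radialKernel ‖t‖| ≤
      2 * π ^ 2 * (ε * (log (1 + (ρ / δ) ^ 2) / 2) + 2 * M * log (ρ / η)) := by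
  have hM0 : 0 ≤ M := (abs_nonneg _).trans (hM 0)
  have hηδ : 0 < η / δ := div_pos hη hδ
  have hK : IntegrableOn (fun t : E4 => radialMajorant ‖t‖) (ball 0 (ρ / δ)) :=
    (continuous_radialMajorant.comp continuous_norm).integrableOn_ball _ _
  have hnear : ∀ t ∈ ball (0 : E4) (η / δ), |g (δ • t) - g 0| ≤ ε := by
    intro t ht
    refine hgη _ ?_
    rw [mem_ball_zero_iff, lt_div_iff₀ hδ] at ht
    rwa [mem_ball_zero_iff, norm_smul, Real.norm_of_nonneg hδ.le, mul_comm]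
  have hfar : ∀ t, |g (δ • t) - g 0| ≤ 2 * M := fun t =>
    (abs_sub _ _).trans (by linarith [hM (δ • t), hM 0])
  refine (abs_setIntegral_mul_le_of_abs_le measurableSet_ball hK
    (fun t => abs_radialKernel_le ‖t‖) hε hnear hfar).trans ?_
  have hle : η / δ ≤ ρ / δ := by gcongr
  have hinner := radialMajorantPrimitive_sub_half_le (ρ / δ)
  have hshell := radialMajorantPrimitive_sub_le hηδ hle
  rw [div_div_div_cancel_right₀ hδ.ne'] at hshell
  rw [setIntegral_sdiff measurableSet_ball hK (ball_subset_ball hle),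
    integral_ball_radialMajorant (hηδ.le.trans hle), integral_ball_radialMajorant hηδ.le]
  calc _ = 2 * π ^ 2 * (ε * (radialMajorantPrimitive (ρ / δ) - 1 / 2) +
        2 * M * (radialMajorantPrimitive (ρ / δ) - radialMajorantPrimitive (η / δ))) := by ring
    _ ≤ _ := by gcongr

theorem tendsto_zero_of_forall_abs_le_mul_add {α : Type*} {l : Filter α} {e a : α → ℝ} {A : ℝ}
    (ha : Tendsto a l (𝓝 A))
    (h : ∀ ε > 0, ∃ b : α → ℝ, Tendsto b l (𝓝 0) ∧ ∀ᶠ x in l, |e x| ≤ ε * a x + b x) :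
    Tendsto e l (𝓝 0) := by
  rw [Metric.tendsto_nhds]
  intro ε hε
  have hA : A < |A| + 1 := (le_abs_self A).trans_lt (lt_add_one _)
  obtain ⟨b, hb, hle⟩ := h (ε / (2 * (|A| + 1))) (by positivity)
  filter_upwards [hle, ha.eventually (gt_mem_nhds hA), hb.eventually (gt_mem_nhds (half_pos hε))]
    with x hx hax hbx
  rw [Real.dist_eq, sub_zero]
  calc |e x| ≤ ε / (2 * (|A| + 1)) * a x + b x := hx
    _ ≤ ε / (2 * (|A| + 1)) * (|A| + 1) + b x := by gcongr
    _ = ε / 2 + b x := by field_simp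
    _ < ε := by linarith

theorem tendsto_integral_ball_sub_mul_radialKernel_div_abs_log {g : E4 → ℝ} {M ρ : ℝ}
    (hg : ContinuousAt g 0) (hM : ∀ x, |g x| ≤ M) (hρ : 0 < ρ) :
    Tendsto (fun δ => (∫ t in ball (0 : E4) (ρ / δ), (g (δ • t) - g 0) * radialKernel ‖t‖) /
      |log δ|) (𝓝[>] 0) (𝓝 0) := by
  have ha : Tendsto (fun δ => 2 * π ^ 2 * (log (1 + (ρ / δ) ^ 2) / 2 / |log δ|)) (𝓝[>] 0)
      (𝓝 (2 * π ^ 2 * 1)) :=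
    (tendsto_div_abs_log_of_tendsto_add_log (tendsto_log_one_add_div_sq_add_log hρ)).const_mul _
  refine tendsto_zero_of_forall_abs_le_mul_add ha fun ε hε => ?_
  obtain ⟨η₀, hη₀, hgη₀⟩ := Metric.continuousAt_iff.mp hg ε hε
  have hη : 0 < min η₀ ρ := lt_min hη₀ hρ
  have hgη : ∀ x ∈ ball (0 : E4) (min η₀ ρ), |g x - g 0| ≤ ε := fun x hx =>
    (hgη₀ ((mem_ball.mp hx).trans_le (min_le_left _ _))).le
  refine ⟨fun δ => 2 * π ^ 2 * (2 * M * log (ρ / min η₀ ρ)) / |log δ|,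
    tendsto_const_nhds.div_atTop tendsto_abs_log_nhdsGT_zero, ?_⟩
  filter_upwards [self_mem_nhdsWithin] with δ (hδ0 : 0 < δ)
  rw [abs_div, abs_abs]
  calc _ ≤ 2 * π ^ 2 * (ε * (log (1 + (ρ / δ) ^ 2) / 2) + 2 * M * log (ρ / min η₀ ρ)) /
        |log δ| := by
        gcongr
        exact abs_integral_ball_sub_mul_radialKernel_le hM hε.le hη (min_le_right _ _) hδ0 hgη
    _ = _ := by ring

/-- If g : ℝ⁴ → ℝ is bounded and continuous and ρ > 0, then
(1/|ln δ|) ∫_{B(0,ρ/δ)} g(δt) (|t|²−1)/(1+|t|²)³ dt → 2π² g(0) as δ → 0⁺. -/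
theorem integral_scaled_limit_log (g : E4 → ℝ) (hg : Continuous g)
    (hb : ∃ M : ℝ, ∀ x : E4, |g x| ≤ M) (ρ : ℝ) (hρ : 0 < ρ) :
    Tendsto
      (fun δ : ℝ =>
        (1 / |Real.log δ|) *
          ∫ t in Metric.ball (0 : E4) (ρ / δ), g (δ • t) * ((‖t‖ ^ 2 - 1) / (1 + ‖t‖ ^ 2) ^ 3))
      (nhdsWithin 0 (Set.Ioi 0)) (nhds (2 * π ^ 2 * g 0)) := by
  obtain ⟨M, hM⟩ := hb
  have hsplit : ∀ δ : ℝ, ∫ t in ball (0 : E4) (ρ / δ), g (δ • t) * radialKernel ‖t‖ =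
      g 0 * (∫ t in ball (0 : E4) (ρ / δ), radialKernel ‖t‖) +
        ∫ t in ball (0 : E4) (ρ / δ), (g (δ • t) - g 0) * radialKernel ‖t‖ := by
    intro δ
    have hk : IntegrableOn (fun t : E4 => g 0 * radialKernel ‖t‖) (ball 0 (ρ / δ)) :=
      Continuous.integrableOn_ball (by fun_prop) _ _
    have hgk : IntegrableOn (fun t : E4 => (g (δ • t) - g 0) * radialKernel ‖t‖)
        (ball 0 (ρ / δ)) :=
      Continuous.integrableOn_ball (by fun_prop) _ _
    rw [← integral_const_mul, ← integral_add hk hgk]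
    congr 1 with t
    ring
  have hlim := ((tendsto_integral_ball_radialKernel_div_abs_log hρ).const_mul (g 0)).add
    (tendsto_integral_ball_sub_mul_radialKernel_div_abs_log hg.continuousAt hM hρ)
  convert hlim using 2 with δ
  · change _ * ∫ t in ball (0 : E4) (ρ / δ), g (δ • t) * radialKernel ‖t‖ = _
    rw [hsplit]
    ring
  · ring
end
end

section
/- Let τ, V : ℝ⁴ → ℝ be twice continuously differentiable, let c > 0, and let ξ₀ ∈ ℝ⁴ satisfy V(ξ₀) > 0 and τ(ξ₀) ≠ 0. Assume ξ₀ is a non-degenerate critical point of f = τ/V, i.e. ∇f(ξ₀) = 0 and the Hessian D²f(ξ₀) is invertible. Set t₀ = c·τ(ξ₀)/V(ξ₀) and define F : ℝ × ℝ⁴ → ℝ × ℝ⁴ by F(t,ξ) = ( c·τ(ξ) − t·V(ξ), c·∇τ(ξ) − t·∇V(ξ) ). Then F(t₀,ξ₀) = 0 and the total derivative DF(t₀,ξ₀) : ℝ × ℝ⁴ → ℝ × ℝ⁴ is an invertible linear map. -/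
/-!
At a critical point of `f = τ / V` one has `∇τ = f • ∇V`, and differentiating the identity
`∇τ = V • ∇f + f • ∇V` (valid near `ξ₀`) gives `D∇τ = V • D²f + f • D∇V` there. With
`t₀ = c f(ξ₀)` the `ξ`-derivative of the first component of `F` therefore vanishes and that of
the second is `c V(ξ₀) • D²f(ξ₀)`, so `DF(t₀, ξ₀)` is block lower triangular with the invertible
diagonal blocks `-V(ξ₀)` and `c V(ξ₀) • D²f(ξ₀)`.
-/

open MeasureTheory Real

noncomputable section

open Filter Topology InnerProductSpace
open scoped Gradient

theorem Function.Bijective.prodMk_mul_fst_add_smul_fst {K M M' : Type*} [Field K]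
    [AddCommGroup M'] [Module K M'] {a : K} (ha : a ≠ 0) {A : M → M'}
    (hA : Function.Bijective A) (v : M') :
    Function.Bijective fun q : K × M => (a * q.1, A q.2 + q.1 • v) := by
  constructor
  · rintro ⟨s, h⟩ ⟨s', h'⟩ hq
    simp only [Prod.mk.injEq, mul_right_inj' ha] at hq
    obtain ⟨rfl, hAh⟩ := hq
    rw [hA.1 (add_right_cancel hAh)]
  · rintro ⟨y, z⟩
    obtain ⟨h, hh⟩ := hA.2 (z - (y / a) • v)
    exact ⟨(y / a, h), by simp [hh, mul_div_cancel₀ y ha]⟩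

section

variable {E : Type*} [NormedAddCommGroup E] [InnerProductSpace ℝ E] [CompleteSpace E]

theorem gradient_mul {f g : E → ℝ} {x : E} (hf : DifferentiableAt ℝ f x)
    (hg : DifferentiableAt ℝ g x) :
    ∇ (fun y => f y * g y) x = f x • ∇ g x + g x • ∇ f x := by
  apply (toDual ℝ E).injective
  ext h
  simp [fderiv_fun_mul hf hg]

theorem ContDiffAt.differentiableAt_gradient {f : E → ℝ} {x : E} {n : WithTop ℕ∞}
    (hf : ContDiffAt ℝ n f x) (hn : 2 ≤ n) : DifferentiableAt ℝ (∇ f) x :=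
  (toDual ℝ E).symm.toContinuousLinearEquiv.differentiableAt.comp x
    ((hf.fderiv_right (m := 1) hn).differentiableAt one_ne_zero)

variable {τ V : E → ℝ} {x : E}

theorem gradient_eventuallyEq_smul_gradient_div (hτ : Differentiable ℝ τ)
    (hV : Differentiable ℝ V) (hx : V x ≠ 0) :
    ∇ τ =ᶠ[𝓝 x] fun y => V y • ∇ (fun z => τ z / V z) y + (τ y / V y) • ∇ V y := by
  filter_upwards [hV.continuous.continuousAt.eventually_ne hx] with y hy
  have hτ_eq : τ =ᶠ[𝓝 y] fun z => V z * (τ z / V z) := by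
    filter_upwards [hV.continuous.continuousAt.eventually_ne hy] with z hz
    rw [mul_div_cancel₀ _ hz]
  rw [hτ_eq.gradient_eq, gradient_mul (hV y) (by fun_prop (disch := exact hy))]

theorem gradient_eq_smul_of_gradient_div_eq_zero (hτ : Differentiable ℝ τ)
    (hV : Differentiable ℝ V) (hx : V x ≠ 0) (hcrit : ∇ (fun y => τ y / V y) x = 0) :
    ∇ τ x = (τ x / V x) • ∇ V x := by
  rw [(gradient_eventuallyEq_smul_gradient_div hτ hV hx).eq_of_nhds, hcrit, smul_zero, zero_add]

theorem fderiv_gradient_eq_of_gradient_div_eq_zero (hτ : Differentiable ℝ τ)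
    (hV : Differentiable ℝ V) (hx : V x ≠ 0) (hcrit : ∇ (fun y => τ y / V y) x = 0)
    (hf₂ : DifferentiableAt ℝ (∇ fun y => τ y / V y) x)
    (hV₂ : DifferentiableAt ℝ (∇ V) x) :
    fderiv ℝ (∇ τ) x =
      V x • fderiv ℝ (∇ fun y => τ y / V y) x + (τ x / V x) • fderiv ℝ (∇ V) x := by
  have hf : DifferentiableAt ℝ (fun y => τ y / V y) x := by fun_prop (disch := exact hx)
  have hDf : fderiv ℝ (fun y => τ y / V y) x = 0 := by
    rw [← toDual_gradient, hcrit, map_zero]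
  rw [(gradient_eventuallyEq_smul_gradient_div hτ hV hx).fderiv_eq,
    ((hV x).hasFDerivAt.fun_smul hf₂.hasFDerivAt).fun_add
      (hf.hasFDerivAt.fun_smul hV₂.hasFDerivAt) |>.fderiv,
    hcrit, hDf]
  simp

def reducedMap (c : ℝ) (τ V : E → ℝ) (p : ℝ × E) : ℝ × E :=
  (c * τ p.2 - p.1 * V p.2, c • ∇ τ p.2 - p.1 • ∇ V p.2)

theorem fderiv_reducedMap_apply (c t : ℝ) (hτ : DifferentiableAt ℝ τ x)
    (hV : DifferentiableAt ℝ V x) (hτ₂ : DifferentiableAt ℝ (∇ τ) x)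
    (hV₂ : DifferentiableAt ℝ (∇ V) x) (q : ℝ × E) :
    fderiv ℝ (reducedMap c τ V) (t, x) q =
      (c * fderiv ℝ τ x q.2 - t * fderiv ℝ V x q.2 - q.1 * V x,
        c • fderiv ℝ (∇ τ) x q.2 - t • fderiv ℝ (∇ V) x q.2 - q.1 • ∇ V x) := by
  have hF : HasFDerivAt (reducedMap c τ V) _ (t, x) :=
    (((hτ.hasFDerivAt.comp (t, x) hasFDerivAt_snd).const_mul c).sub
      (hasFDerivAt_fst.mul (hV.hasFDerivAt.comp (t, x) hasFDerivAt_snd))).prodMk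
    (((hτ₂.hasFDerivAt.comp (f := Prod.snd) (t, x) hasFDerivAt_snd).const_smul c).sub
      (hasFDerivAt_fst.smul (hV₂.hasFDerivAt.comp (f := Prod.snd) (t, x) hasFDerivAt_snd)))
  rw [hF.fderiv]
  ext <;> simp [sub_sub]
  ring

end

theorem reduced_map_nondegenerate_general (τ V : E4 → ℝ) (hτ : ContDiff ℝ 2 τ)
    (hV : ContDiff ℝ 2 V) (c : ℝ) (hc : 0 < c) (ξ₀ : E4) (hVpos : 0 < V ξ₀)
    (hcrit : gradient (fun x => τ x / V x) ξ₀ = 0)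
    (hnondeg : Function.Bijective (fderiv ℝ (gradient fun x => τ x / V x) ξ₀)) :
    (fun p : ℝ × E4 => (c * τ p.2 - p.1 * V p.2, c • gradient τ p.2 - p.1 • gradient V p.2))
        (c * τ ξ₀ / V ξ₀, ξ₀) = 0 ∧
      Function.Bijective
        (fderiv ℝ
          (fun p : ℝ × E4 =>
            (c * τ p.2 - p.1 * V p.2, c • gradient τ p.2 - p.1 • gradient V p.2))
          (c * τ ξ₀ / V ξ₀, ξ₀)) := by
  have hV₀ : V ξ₀ ≠ 0 := hVpos.ne'
  have hτ₁ := hτ.differentiable two_ne_zero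
  have hV₁ := hV.differentiable two_ne_zero
  have hτ₂ := hτ.contDiffAt.differentiableAt_gradient (x := ξ₀) le_rfl
  have hV₂ := hV.contDiffAt.differentiableAt_gradient (x := ξ₀) le_rfl
  have hf₂ := (hτ.contDiffAt.div hV.contDiffAt hV₀).differentiableAt_gradient le_rfl
  have hgrad := gradient_eq_smul_of_gradient_div_eq_zero hτ₁ hV₁ hV₀ hcrit
  have hDτ (h : E4) : fderiv ℝ τ ξ₀ h = τ ξ₀ / V ξ₀ * fderiv ℝ V ξ₀ h := by
    rw [← inner_gradient_left, hgrad, real_inner_smul_left, inner_gradient_left]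
  have hHess := fderiv_gradient_eq_of_gradient_div_eq_zero hτ₁ hV₁ hV₀ hcrit hf₂ hV₂
  have ht₀ : c * τ ξ₀ / V ξ₀ = c * (τ ξ₀ / V ξ₀) := mul_div_assoc _ _ _
  change reducedMap c τ V _ = 0 ∧ Function.Bijective (fderiv ℝ (reducedMap c τ V) _)
  refine ⟨by simp [reducedMap, hgrad, smul_smul, ht₀, mul_assoc, div_mul_cancel₀ _ hV₀], ?_⟩
  set H := fderiv ℝ (∇ fun x => τ x / V x) ξ₀
  have hDF : ⇑(fderiv ℝ (reducedMap c τ V) (c * τ ξ₀ / V ξ₀, ξ₀)) =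
      fun q => (-V ξ₀ * q.1, (c * V ξ₀) • H q.2 + q.1 • -∇ V ξ₀) := by
    funext q
    rw [fderiv_reducedMap_apply c _ (hτ₁ ξ₀) (hV₁ ξ₀) hτ₂ hV₂, hDτ, hHess, ht₀]
    refine Prod.ext (by ring) ?_
    simp only [add_apply, smul_apply]
    module
  have hcV : c * V ξ₀ ≠ 0 := mul_ne_zero hc.ne' hV₀
  rw [hDF]
  exact ((LinearEquiv.smulOfNeZero ℝ E4 _ hcV).bijective.comp hnondeg).prodMk_mul_fst_add_smul_fst
    (neg_ne_zero.2 hV₀) _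

/-- If ξ₀ is a non-degenerate critical point of f = τ/V with V(ξ₀) > 0 and τ(ξ₀) ≠ 0,
and t₀ = c·τ(ξ₀)/V(ξ₀), then the map F(t,ξ) = (c·τ(ξ) − t·V(ξ), c·∇τ(ξ) − t·∇V(ξ))
vanishes at (t₀,ξ₀) and its total derivative there is invertible. -/
theorem reduced_map_nondegenerate (τ V : E4 → ℝ) (hτ : ContDiff ℝ 2 τ)
    (hV : ContDiff ℝ 2 V) (c : ℝ) (hc : 0 < c) (ξ₀ : E4) (hVpos : 0 < V ξ₀)
    (hτne : τ ξ₀ ≠ 0)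
    (hcrit : gradient (fun x => τ x / V x) ξ₀ = 0)
    (hnondeg : Function.Bijective (fderiv ℝ (gradient fun x => τ x / V x) ξ₀)) :
    (fun p : ℝ × E4 => (c * τ p.2 - p.1 * V p.2, c • gradient τ p.2 - p.1 • gradient V p.2))
        (c * τ ξ₀ / V ξ₀, ξ₀) = 0 ∧
      Function.Bijective
        (fderiv ℝ
          (fun p : ℝ × E4 =>
            (c * τ p.2 - p.1 * V p.2, c • gradient τ p.2 - p.1 • gradient V p.2))
          (c * τ ξ₀ / V ξ₀, ξ₀)) :=
  reduced_map_nondegenerate_general τ V hτ hV c hc ξ₀ hVpos hcrit hnondeg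
end
end
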